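/- Let D > 16 be an integer with D ≡ 1 (mod 8) and D ≠ 41. Then 𝒬_D has exactly two components; moreover, ((w,h,t,e), ε) and ((w',h',t',e'), ε') lie in the same component if and only if either ε = ε' and e ≡ e' (mod 4), or ε = −ε' and e ≡ −e' (mod 4). -/

import Mathlib

/-- gcd of four integers. -/
def gcd4 (a b c d : ℤ) : ℕ := Int.gcd a (Int.gcd b (Int.gcd c d : ℤ) : ℤ)

/-- The prototype set `𝒫_D`: quadruples `(w,h,t,e)` with `w > 0`, `h > 0`,
`0 ≤ t < gcd(w,h)`, `e + 2h < w`, `gcd(w,h,t,e) = 1` and `D = e² + 8wh`. -/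
def IsProto (D : ℤ) (p : ℤ × ℤ × ℤ × ℤ) : Prop :=
  0 < p.1 ∧ 0 < p.2.1 ∧ 0 ≤ p.2.2.1 ∧ p.2.2.1 < (Int.gcd p.1 p.2.1 : ℤ) ∧
  p.2.2.2 + 2 * p.2.1 < p.1 ∧ gcd4 p.1 p.2.1 p.2.2.1 p.2.2.2 = 1 ∧
  D = p.2.2.2 ^ 2 + 8 * p.1 * p.2.1

/-- The Butterfly move `B_q` (for a positive integer `q`) relates `(w,h,t,e)` to
`(w',h',t',e')` whenever `(e+4qh)² < D`, `e' = -e-4qh` and `h' = gcd(qh, w+qt)`. -/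
def BMove (D q : ℤ) (p p' : ℤ × ℤ × ℤ × ℤ) : Prop :=
  (p.2.2.2 + 4 * q * p.2.1) ^ 2 < D ∧
  p'.2.2.2 = -p.2.2.2 - 4 * q * p.2.1 ∧
  p'.2.1 = (Int.gcd (q * p.2.1) (p.1 + q * p.2.2.1) : ℤ)

/-- The Butterfly move `B_∞` relates `(w,h,t,e)` to `(w',h',t',e')` whenever
`e' = -e-4h` and `h' = gcd(t,h)`. -/
def BMoveInf (p p' : ℤ × ℤ × ℤ × ℤ) : Prop :=
  p'.2.2.2 = -p.2.2.2 - 4 * p.2.1 ∧ p'.2.1 = (Int.gcd p.2.2.1 p.2.1 : ℤ)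

/-- Two prototypes of `𝒫_D` are related when some Butterfly move
`B_q`, `q ∈ {1,2,3,…} ∪ {∞}`, takes one to the other. -/
def Butterfly (D : ℤ) (p p' : ℤ × ℤ × ℤ × ℤ) : Prop :=
  IsProto D p ∧ IsProto D p' ∧ ((∃ q : ℤ, 0 < q ∧ BMove D q p p') ∨ BMoveInf p p')

/-- Membership in `𝒬_D = 𝒫_D × {+1, -1}`. -/
def IsProtoQ (D : ℤ) (x : (ℤ × ℤ × ℤ × ℤ) × ℤ) : Prop :=
  IsProto D x.1 ∧ (x.2 = 1 ∨ x.2 = -1)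

/-- The generating relation on `𝒬_D`: `(p, ε)` is related to `(p', -ε)` whenever `p` is
related to `p'` by a Butterfly move. -/
def QMove (D : ℤ) (x y : (ℤ × ℤ × ℤ × ℤ) × ℤ) : Prop :=
  Butterfly D x.1 y.1 ∧ y.2 = -x.2

/-!
Because `D ≡ 1 (mod 8)`, every `e` is odd, and a move replaces `(e, ε)` by `(-e - 4k, -ε)`;
hence `ε · χ₄(e)` is invariant and there are at least two components. Conversely, Butterfly
moves lower `h` until `h = 1`, where the prototype is `((D - e²)/8, 1, 0, e)`. Among these,
`B_∞` realises `e ↦ -e - 4` and a `B_2` move (direct when `w` is odd, through three prototypes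
with `h = 2` when `w` is even) realises `e ↦ -e - 8`; composing them shifts `e` by `4`, so every
prototype reaches `e = -1` with one of the two signs.
-/

open ZMod

local notation:50 x " ∼[" D "] " y:50 => Relation.EqvGen (QMove D) x y

lemma sq_lt_of_le_of_le {D a b x : ℤ} (hax : a ≤ x) (hxb : x ≤ b) (ha : a ^ 2 < D)
    (hb : b ^ 2 < D) : x ^ 2 < D := by
  rcases le_total x 0 with hx | hx <;> nlinarith

lemma add_four_mul_sq_lt_iff {D w h e : ℤ} (hh : 0 < h) (hD : D = e ^ 2 + 8 * w * h) :
    (e + 4 * h) ^ 2 < D ↔ e + 2 * h < w := by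
  subst hD
  constructor <;> intro H <;> nlinarith

lemma sq_emod_eight_of_odd {e : ℤ} (he : Odd e) : e ^ 2 % 8 = 1 := by
  obtain ⟨k, rfl⟩ := he
  obtain ⟨m, hm⟩ := Int.even_mul_succ_self k
  have : (2 * k + 1) ^ 2 = 8 * m + 1 := by linear_combination 4 * hm
  omega

lemma Int.gcd_two_of_odd {m : ℤ} (hm : Odd m) : Int.gcd 2 m = 1 :=
  Int.isCoprime_iff_gcd_eq_one.mp (Int.isCoprime_two_left.mpr hm)

lemma Int.gcd_two_of_even {m : ℤ} (hm : Even m) : Int.gcd 2 m = 2 := by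
  exact_mod_cast Int.gcd_eq_left zero_le_two (even_iff_two_dvd.mp hm)

lemma gcd4_zero (w h e : ℤ) : gcd4 w h 0 e = Int.gcd w (Int.gcd h e) := by
  simp [gcd4, Int.gcd, Int.natAbs_abs]

lemma gcd4_one (w h e : ℤ) : gcd4 w h 1 e = 1 := by
  simp [gcd4]

lemma gcd4_zero_eq_one_of_isCoprime_left {w h e : ℤ} (hwh : IsCoprime w h) :
    gcd4 w h 0 e = 1 := by
  rw [gcd4_zero, ← Int.isCoprime_iff_gcd_eq_one]
  exact hwh.of_isCoprime_of_dvd_right (Int.gcd_dvd_left h e)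

lemma gcd4_zero_eq_one_of_isCoprime_right {w h e : ℤ} (hhe : IsCoprime h e) :
    gcd4 w h 0 e = 1 := by
  rw [gcd4_zero, Int.isCoprime_iff_gcd_eq_one.mp hhe]
  exact Int.gcd_one_right w

lemma isCoprime_of_gcd4_zero_eq_one {w h e : ℤ} (hg : gcd4 w h 0 e = 1) (hdvd : h ∣ w) :
    IsCoprime h e := by
  have hw : (Int.gcd h e : ℤ) ∣ w := (Int.gcd_dvd_left h e).trans hdvd
  rw [gcd4_zero, ← Int.natCast_inj, Int.gcd_eq_right (Int.natCast_nonneg _) hw] at hg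
  exact Int.isCoprime_iff_gcd_eq_one.mpr (by exact_mod_cast hg)

lemma isProto_iff {D w h t e : ℤ} :
    IsProto D (w, h, t, e) ↔ 0 < w ∧ 0 < h ∧ 0 ≤ t ∧ t < (Int.gcd w h : ℤ) ∧ e + 2 * h < w ∧
      gcd4 w h t e = 1 ∧ D = e ^ 2 + 8 * w * h :=
  Iff.rfl

namespace IsProto

variable {D : ℤ} {p : ℤ × ℤ × ℤ × ℤ}

lemma sq_lt (hp : IsProto D p) : p.2.2.2 ^ 2 < D := by
  obtain ⟨hw, hh, -, -, -, -, hD⟩ := hp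
  nlinarith [mul_pos hw hh]

lemma odd (hD : D % 8 = 1) (hp : IsProto D p) : Odd p.2.2.2 := by
  obtain ⟨-, -, -, -, -, -, hDp⟩ := hp
  by_contra hodd
  obtain ⟨k, hk⟩ := Int.not_odd_iff_even.mp hodd
  have : (4 : ℤ) ∣ D := ⟨k ^ 2 + 2 * p.1 * p.2.1, by rw [hDp, hk]; ring⟩
  omega

end IsProto

lemma exists_isProto {D w h e : ℤ} (hw : 0 < w) (hh : 0 < h) (hlt : e + 2 * h < w)
    (hD : D = e ^ 2 + 8 * w * h) :
    ∃ t, IsProto D (w, h, t, e) ∧ (t = 1 ∨ Int.gcd w h = 1) := by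
  have hg : 0 < Int.gcd w h := Int.gcd_pos_of_ne_zero_right w hh.ne'
  by_cases hg1 : Int.gcd w h = 1
  · refine ⟨0, isProto_iff.mpr ⟨hw, hh, le_rfl, by omega, hlt, ?_, hD⟩, .inr hg1⟩
    exact gcd4_zero_eq_one_of_isCoprime_left (Int.isCoprime_iff_gcd_eq_one.mpr hg1)
  · exact ⟨1, isProto_iff.mpr ⟨hw, hh, zero_le_one, by omega, hlt, gcd4_one w h e, hD⟩, .inl rfl⟩

/-- Common core of `B_q` (with `k = qh`) and `B_∞` (with `k = h`). -/
lemma exists_isProto_neg_sub_four_mul {D e k h' : ℤ} (hh' : 0 < h') (hh'k : h' ≤ k)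
    (he : e ^ 2 < D) (hek : (e + 4 * k) ^ 2 < D) (hdvd : 8 * h' ∣ D - (e + 4 * k) ^ 2) :
    ∃ w' t', IsProto D (w', h', t', -e - 4 * k) := by
  obtain ⟨w', hw'⟩ := hdvd
  have hD : D = (-e - 4 * k) ^ 2 + 8 * w' * h' := by linear_combination hw'
  have hw'pos : 0 < w' := by nlinarith
  have hlt : -e - 4 * k + 2 * h' < w' := by
    rw [← add_four_mul_sq_lt_iff hh' hD]
    exact sq_lt_of_le_of_le (a := -(e + 4 * k)) (b := -e) (by linarith) (by linarith)
      (by rwa [neg_sq]) (by rwa [neg_sq])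
  obtain ⟨t', hp', -⟩ := exists_isProto hw'pos hh' hlt hD
  exact ⟨w', t', hp'⟩

lemma exists_bMove {D q w h t e : ℤ} (hp : IsProto D (w, h, t, e)) (hq : 0 < q)
    (hsq : (e + 4 * q * h) ^ 2 < D) : ∃ p', IsProto D p' ∧ BMove D q (w, h, t, e) p' := by
  have he := hp.sq_lt
  obtain ⟨-, hh, -, -, -, -, hD⟩ := isProto_iff.mp hp
  set g : ℤ := (Int.gcd (q * h) (w + q * t) : ℤ)
  have hqh : 0 < q * h := mul_pos hq hh
  have hg : 0 < g := Int.natCast_pos.mpr (Int.gcd_pos_of_ne_zero_left _ hqh.ne')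
  obtain ⟨a, ha⟩ : g ∣ q * h := Int.gcd_dvd_left _ _
  obtain ⟨b, hb⟩ : g ∣ w + q * t := Int.gcd_dvd_right _ _
  have hdvd : 8 * g ∣ D - (e + 4 * (q * h)) ^ 2 :=
    ⟨b * h - t * a - a * e - 2 * a * q * h,
      by linear_combination hD + 8 * h * hb - (8 * e + 8 * t + 16 * q * h) * ha⟩
  obtain ⟨w', t', hp'⟩ := exists_isProto_neg_sub_four_mul hg (Int.gcd_le_left _ hqh) he
    (by rwa [← mul_assoc]) hdvd
  refine ⟨(w', g, t', -e - 4 * q * h), by rwa [mul_assoc], hsq, rfl, rfl⟩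

lemma exists_bMoveInf {D w h t e : ℤ} (hp : IsProto D (w, h, t, e)) :
    ∃ p', IsProto D p' ∧ BMoveInf (w, h, t, e) p' := by
  have he := hp.sq_lt
  obtain ⟨-, hh, -, -, hlt, -, hD⟩ := isProto_iff.mp hp
  set g : ℤ := (Int.gcd t h : ℤ)
  have hg : 0 < g := Int.natCast_pos.mpr (Int.gcd_pos_of_ne_zero_right _ hh.ne')
  obtain ⟨a, ha⟩ : g ∣ h := Int.gcd_dvd_right _ _
  have hdvd : 8 * g ∣ D - (e + 4 * h) ^ 2 :=
    ⟨a * (w - e - 2 * h), by linear_combination hD + 8 * (w - e - 2 * h) * ha⟩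
  obtain ⟨w', t', hp'⟩ := exists_isProto_neg_sub_four_mul hg (Int.gcd_le_right _ hh) he
    ((add_four_mul_sq_lt_iff hh hD).mpr hlt) hdvd
  exact ⟨(w', g, t', -e - 4 * h), hp', rfl, rfl⟩

lemma connected_of_butterfly {D ε ε' : ℤ} {p p' : ℤ × ℤ × ℤ × ℤ} (h : Butterfly D p p')
    (hε : ε' = -ε) : (p, ε) ∼[D] (p', ε') :=
  .rel _ _ ⟨h, hε⟩

lemma exists_butterfly_lt_of_pos {D w h t e : ℤ} (hp : IsProto D (w, h, t, e)) (ht : 0 < t) :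
    ∃ p', Butterfly D (w, h, t, e) p' ∧ p'.2.1 < h := by
  obtain ⟨p', hp', hmove⟩ := exists_bMoveInf hp
  refine ⟨p', ⟨hp, hp', .inr hmove⟩, ?_⟩
  obtain ⟨-, hh, -, htg, -⟩ := isProto_iff.mp hp
  calc p'.2.1 = Int.gcd t h := hmove.2
    _ ≤ t := Int.gcd_le_left _ ht
    _ < Int.gcd w h := htg
    _ ≤ h := Int.gcd_le_right _ hh

lemma exists_butterfly_lt_of_not_dvd {D w h e : ℤ} (hp : IsProto D (w, h, 0, e))
    (hdvd : ¬ h ∣ w) : ∃ p', Butterfly D (w, h, 0, e) p' ∧ p'.2.1 < h := by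
  obtain ⟨-, hh, -, -, hlt, -, hD⟩ := isProto_iff.mp hp
  obtain ⟨p', hp', hmove⟩ := exists_bMove hp one_pos
    (by simpa using (add_four_mul_sq_lt_iff hh hD).mpr hlt)
  refine ⟨p', ⟨hp, hp', .inl ⟨1, one_pos, hmove⟩⟩, ?_⟩
  rw [hmove.2.2]
  simp only [one_mul, mul_zero, add_zero]
  refine lt_of_le_of_ne (Int.gcd_le_left _ hh) fun heq => hdvd ?_
  exact heq ▸ Int.gcd_dvd_right h w

lemma exists_butterfly_not_dvd_of_dvd {D w h e : ℤ} (hp : IsProto D (w, h, 0, e)) (h1 : 1 < h)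
    (hdvd : h ∣ w) : ∃ w', Butterfly D (w, h, 0, e) (w', h, 0, -e - 4 * h) ∧ ¬ h ∣ w' := by
  obtain ⟨hw, hh, -, -, hlt, hg, hD⟩ := isProto_iff.mp hp
  have hcop : IsCoprime h e := isCoprime_of_gcd4_zero_eq_one hg hdvd
  have hcop' : IsCoprime h (-e - 4 * h) := by
    have := hcop.neg_right.add_mul_left_right (-4)
    rwa [show -e + h * -4 = -e - 4 * h by ring] at this
  have hp' : IsProto D (w - e - 2 * h, h, 0, -e - 4 * h) := isProto_iff.mpr
    ⟨by linarith, hh, le_rfl, Int.natCast_pos.mpr (Int.gcd_pos_of_ne_zero_right _ hh.ne'),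
      by linarith, gcd4_zero_eq_one_of_isCoprime_right hcop', by rw [hD]; ring⟩
  refine ⟨w - e - 2 * h, ⟨hp, hp', .inl ⟨1, one_pos, ?_, ?_, ?_⟩⟩, fun hdvd' => ?_⟩
  · simpa using (add_four_mul_sq_lt_iff hh hD).mpr hlt
  · simp
  · simpa using (Int.gcd_eq_left hh.le hdvd).symm
  · have hde : h ∣ e := by
      have := (hdvd.sub hdvd').sub (dvd_mul_left h 2)
      rwa [show w - (w - e - 2 * h) - 2 * h = e by ring] at this
    have := Int.isUnit_iff.mp (hcop.isUnit_of_dvd' dvd_rfl hde)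
    omega

lemma exists_connected_lt {D w h t e ε : ℤ} (hp : IsProto D (w, h, t, e)) (h1 : 1 < h) :
    ∃ p' δ, IsProto D p' ∧ p'.2.1 < h ∧ ((w, h, t, e), ε) ∼[D] (p', δ) := by
  rcases (isProto_iff.mp hp).2.2.1.eq_or_lt with rfl | ht
  · by_cases hdvd : h ∣ w
    · obtain ⟨w', hb, hndvd⟩ := exists_butterfly_not_dvd_of_dvd hp h1 hdvd
      obtain ⟨p', hb', hlt⟩ := exists_butterfly_lt_of_not_dvd hb.2.1 hndvd
      exact ⟨p', ε, hb'.2.1, hlt, .trans _ _ _ (connected_of_butterfly hb rfl)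
        (connected_of_butterfly hb' (neg_neg ε).symm)⟩
    · obtain ⟨p', hb, hlt⟩ := exists_butterfly_lt_of_not_dvd hp hdvd
      exact ⟨p', -ε, hb.2.1, hlt, connected_of_butterfly hb rfl⟩
  · obtain ⟨p', hb, hlt⟩ := exists_butterfly_lt_of_pos hp ht
    exact ⟨p', -ε, hb.2.1, hlt, connected_of_butterfly hb rfl⟩

def reduced (D e : ℤ) : ℤ × ℤ × ℤ × ℤ := ((D - e ^ 2) / 8, 1, 0, e)

def ReducedIndex (D e : ℤ) : Prop := Odd e ∧ e ^ 2 < D ∧ (e + 4) ^ 2 < D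

namespace ReducedIndex

variable {D e : ℤ}

lemma neg_sub_four (he : ReducedIndex D e) : ReducedIndex D (-e - 4) := by
  obtain ⟨hodd, he, he4⟩ := he
  refine ⟨?_, ?_, ?_⟩
  · simpa [sub_eq_add_neg] using hodd.neg.add_even (by decide : Even (-4 : ℤ))
  · rwa [show (-e - 4) ^ 2 = (e + 4) ^ 2 by ring]
  · rwa [show (-e - 4 + 4) ^ 2 = e ^ 2 by ring]

lemma neg_sub_eight (he : ReducedIndex D e) (he8 : (e + 8) ^ 2 < D) :
    ReducedIndex D (-e - 8) := by
  refine ⟨?_, by rwa [show (-e - 8) ^ 2 = (e + 8) ^ 2 by ring],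
    by rw [show (-e - 8 + 4) ^ 2 = (e + 4) ^ 2 by ring]; exact he.2.2⟩
  simpa [sub_eq_add_neg] using he.1.neg.add_even (by decide : Even (-8 : ℤ))

lemma of_le_of_le {a b x : ℤ} (ha : ReducedIndex D a) (hb : ReducedIndex D b) (hax : a ≤ x)
    (hxb : x ≤ b) (hx : Odd x) : ReducedIndex D x :=
  ⟨hx, sq_lt_of_le_of_le hax hxb ha.2.1 hb.2.1,
    sq_lt_of_le_of_le (by linarith) (by linarith) ha.2.2 hb.2.2⟩

end ReducedIndex

lemma reducedIndex_neg_one {D : ℤ} (h16 : 16 < D) : ReducedIndex D (-1) :=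
  ⟨by decide, by linarith, by linarith⟩

lemma eq_sq_add_eight_mul_div_eight {D e : ℤ} (hD : D % 8 = 1) (he : Odd e) :
    D = e ^ 2 + 8 * ((D - e ^ 2) / 8) := by
  have := sq_emod_eight_of_odd he
  omega

lemma isProto_reduced {D e : ℤ} (hD : D % 8 = 1) (he : ReducedIndex D e) :
    IsProto D (reduced D e) := by
  obtain ⟨hodd, he, he4⟩ := he
  have hDw : D = e ^ 2 + 8 * ((D - e ^ 2) / 8) * 1 := by
    rw [mul_one]; exact eq_sq_add_eight_mul_div_eight hD hodd
  refine ⟨by dsimp only [reduced]; linarith, one_pos, le_rfl, by simp [reduced], ?_,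
    gcd4_zero_eq_one_of_isCoprime_right isCoprime_one_left, hDw⟩
  exact (add_four_mul_sq_lt_iff one_pos hDw).mp (by rwa [mul_one])

lemma IsProto.eq_reduced {D w t e : ℤ} (hp : IsProto D (w, 1, t, e)) :
    (w, 1, t, e) = reduced D e := by
  obtain ⟨-, -, ht0, ht, -, -, hDp⟩ := isProto_iff.mp hp
  simp only [Int.gcd_one_right] at ht
  have hw : (D - e ^ 2) / 8 = w := by rw [hDp]; omega
  rw [reduced, hw, show t = 0 by omega]

lemma IsProto.reducedIndex {D w t e : ℤ} (hD : D % 8 = 1) (hp : IsProto D (w, 1, t, e)) :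
    ReducedIndex D e := by
  obtain ⟨-, -, -, -, hlt, -, hDp⟩ := isProto_iff.mp hp
  exact ⟨hp.odd hD, hp.sq_lt, (add_four_mul_sq_lt_iff one_pos hDp).mpr hlt⟩

lemma exists_connected_reduced {D ε : ℤ} (hD : D % 8 = 1) {p : ℤ × ℤ × ℤ × ℤ}
    (hp : IsProto D p) : ∃ e δ, ReducedIndex D e ∧ (p, ε) ∼[D] (reduced D e, δ) := by
  induction hn : p.2.1.toNat using Nat.strong_induction_on generalizing p ε with
  | _ n ih =>
    obtain ⟨w, h, t, e⟩ := p
    obtain ⟨-, hh, -⟩ := isProto_iff.mp hp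
    rcases (show 1 ≤ h by omega).eq_or_lt with rfl | h1
    · exact ⟨e, ε, hp.reducedIndex hD, hp.eq_reduced ▸ .refl _⟩
    · obtain ⟨p', δ, hp', hlt, hconn⟩ := exists_connected_lt (ε := ε) hp h1
      obtain ⟨e', δ', he', hconn'⟩ := ih _ (by simp only at hn; omega) hp' rfl (ε := δ)
      exact ⟨e', δ', he', .trans _ _ _ hconn hconn'⟩

lemma connected_reduced_neg_sub_four {D e ε : ℤ} (hD : D % 8 = 1) (he : ReducedIndex D e) :
    (reduced D e, ε) ∼[D] (reduced D (-e - 4), -ε) :=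
  connected_of_butterfly ⟨isProto_reduced hD he, isProto_reduced hD he.neg_sub_four,
    .inr ⟨by simp [reduced], by simp [reduced]⟩⟩ rfl

lemma connected_reduced_of_h_eq_two {D w t e ε : ℤ} (hD : D % 8 = 1)
    (hp : IsProto D (w, 2, t, e)) (ht : t = 1 ∨ Int.gcd w 2 = 1) :
    ((w, 2, t, e), ε) ∼[D] (reduced D (-e - 8), -ε) := by
  have hodd : Odd e := hp.odd hD
  have he : e ^ 2 < D := hp.sq_lt
  obtain ⟨-, -, ht0, htg, hlt, -, hDp⟩ := isProto_iff.mp hp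
  have he8 : (e + 4 * 2) ^ 2 < D := (add_four_mul_sq_lt_iff two_pos hDp).mpr hlt
  have he4 : (e + 4) ^ 2 < D := sq_lt_of_le_of_le (by linarith) (by linarith) he he8
  have hred := ReducedIndex.neg_sub_eight ⟨hodd, he, he4⟩ (by linarith)
  refine connected_of_butterfly ⟨hp, isProto_reduced hD hred, ?_⟩ rfl
  rcases ht with rfl | hg
  · exact .inr ⟨by simp [reduced], by simp [reduced]⟩
  · obtain rfl : t = 0 := by omega
    exact .inl ⟨1, one_pos, by simpa using he8, by simp [reduced],
      by simp [reduced, Int.gcd_comm, hg]⟩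

lemma connected_reduced_neg_sub_eight {D e ε : ℤ} (hD : D % 8 = 1) (he : ReducedIndex D e)
    (he8 : (e + 8) ^ 2 < D) : (reduced D e, ε) ∼[D] (reduced D (-e - 8), -ε) := by
  have hred := he.neg_sub_eight he8
  have hDw := eq_sq_add_eight_mul_div_eight hD he.1
  have hB2 : (e + 4 * 2 * 1) ^ 2 < D := by simpa using he8
  rcases Int.even_or_odd ((D - e ^ 2) / 8) with ⟨m, hw⟩ | hw
  · -- `B_2` only reaches height `gcd(2, w) = 2`; `B_∞` returns to `e` at height `2`, where `t`
    -- can be chosen so that one more move reaches height `1`.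
    have hD16 : D = e ^ 2 + 8 * m * 2 := by rw [hDw, hw]; ring
    have hm : 0 < m := by linarith [he.2.1]
    have hem : e + 4 < m := by nlinarith
    have hP1 : IsProto D (m - e - 4, 2, 0, -e - 8) := isProto_iff.mpr
      ⟨by linarith, two_pos, le_rfl,
        Int.natCast_pos.mpr (Int.gcd_pos_of_ne_zero_right _ two_ne_zero),
        by linarith, gcd4_zero_eq_one_of_isCoprime_right (Int.isCoprime_two_left.mpr hred.1),
        by rw [hD16]; ring⟩
    obtain ⟨t, hP2, ht⟩ := exists_isProto hm two_pos (by linarith) hD16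
    calc (reduced D e, ε) ∼[D] ((m - e - 4, 2, 0, -e - 8), -ε) :=
          connected_of_butterfly ⟨isProto_reduced hD he, hP1, .inl ⟨2, two_pos, hB2,
            by simp [reduced], by simp [reduced, Int.gcd_two_of_even ⟨m, hw⟩]⟩⟩ rfl
      _ ∼[D] ((m, 2, t, e), ε) :=
          connected_of_butterfly ⟨hP1, hP2, .inr ⟨by ring, by simp⟩⟩ (neg_neg ε).symm
      _ ∼[D] (reduced D (-e - 8), -ε) := connected_reduced_of_h_eq_two hD hP2 ht
  · exact connected_of_butterfly ⟨isProto_reduced hD he, isProto_reduced hD hred,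
      .inl ⟨2, two_pos, hB2, by simp [reduced], by simp [reduced, Int.gcd_two_of_odd hw]⟩⟩ rfl

lemma connected_reduced_add_four {D e ε : ℤ} (hD : D % 8 = 1) (he : ReducedIndex D e)
    (he4 : ReducedIndex D (e + 4)) : (reduced D e, ε) ∼[D] (reduced D (e + 4), ε) := by
  have he8 : (e + 8) ^ 2 < D := by simpa [add_assoc] using he4.2.2
  have hσ := connected_reduced_neg_sub_four hD (he.neg_sub_eight he8) (ε := -ε)
  rw [neg_neg, show -(-e - 8) - 4 = e + 4 by ring] at hσ
  calc (reduced D e, ε) ∼[D] (reduced D (-e - 8), -ε) := connected_reduced_neg_sub_eight hD he he8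
    _ ∼[D] (reduced D (e + 4), ε) := hσ

lemma connected_reduced_of_modEq {D e f ε : ℤ} (hD : D % 8 = 1) (he : ReducedIndex D e)
    (hf : ReducedIndex D f) (hef : e ≡ f [ZMOD 4]) : (reduced D e, ε) ∼[D] (reduced D f, ε) := by
  wlog hle : e ≤ f generalizing e f
  · exact .symm _ _ (this hf he hef.symm (by omega))
  obtain ⟨n, rfl⟩ : ∃ n : ℕ, f = e + 4 * n :=
    ⟨((f - e) / 4).toNat, by have := Int.ModEq.dvd hef; omega⟩
  induction n with
  | zero => simpa using .refl _
  | succ n ih =>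
    have hmid : ReducedIndex D (e + 4 * n) :=
      he.of_le_of_le hf (by omega) (by push_cast; omega) (he.1.add_even ⟨2 * n, by ring⟩)
    rw [Nat.cast_succ, mul_add_one, ← add_assoc] at hf ⊢
    exact .trans _ _ _ (ih hmid (by simp [Int.ModEq]) (by omega))
      (connected_reduced_add_four hD hmid hf)

lemma exists_connected_reduced_neg_one {D e ε : ℤ} (hD : D % 8 = 1) (h16 : 16 < D)
    (he : ReducedIndex D e) : ∃ δ, (reduced D e, ε) ∼[D] (reduced D (-1), δ) := by
  have h1 := reducedIndex_neg_one h16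
  have hodd := Int.odd_iff.mp he.1
  by_cases h4 : e ≡ -1 [ZMOD 4]
  · exact ⟨ε, connected_reduced_of_modEq hD he h1 h4⟩
  · have h3 : ReducedIndex D (-3) := h1.neg_sub_four
    have hσ : (reduced D (-1), -ε) ∼[D] (reduced D (-3), ε) := by
      simpa using connected_reduced_neg_sub_four hD h1 (ε := -ε)
    refine ⟨-ε, .trans _ _ _ (connected_reduced_of_modEq hD he h3 ?_) (.symm _ _ hσ)⟩
    unfold Int.ModEq at h4 ⊢
    omega

def spin (x : (ℤ × ℤ × ℤ × ℤ) × ℤ) : ℤ := x.2 * χ₄ x.1.2.2.2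

lemma χ₄_neg_sub_four_mul {e : ℤ} (he : Odd e) (k : ℤ) : χ₄ (-e - 4 * k : ℤ) = -χ₄ e := by
  have := Int.odd_iff.mp he
  rw [χ₄_int_eq_if_mod_four, χ₄_int_eq_if_mod_four]
  split_ifs <;> omega

lemma spin_eq_of_qMove {D : ℤ} (hD : D % 8 = 1) {x y : (ℤ × ℤ × ℤ × ℤ) × ℤ} (h : QMove D x y) :
    spin x = spin y := by
  obtain ⟨⟨hx, -, hmove⟩, hε⟩ := h
  obtain ⟨k, hk⟩ : ∃ k, y.1.2.2.2 = -x.1.2.2.2 - 4 * k := by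
    rcases hmove with ⟨q, -, hm⟩ | hm
    · exact ⟨q * x.1.2.1, by rw [hm.2.1]; ring⟩
    · exact ⟨x.1.2.1, hm.1⟩
  rw [spin, spin, hε, hk, χ₄_neg_sub_four_mul (hx.odd hD)]
  ring

lemma spin_eq_of_connected {D : ℤ} (hD : D % 8 = 1) {x y : (ℤ × ℤ × ℤ × ℤ) × ℤ}
    (h : x ∼[D] y) : spin x = spin y := by
  induction h with
  | rel _ _ h => exact spin_eq_of_qMove hD h
  | refl => rfl
  | symm _ _ _ ih => exact ih.symm
  | trans _ _ _ _ _ ih₁ ih₂ => exact ih₁.trans ih₂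

lemma spin_reduced_neg_one (D δ : ℤ) : spin (reduced D (-1), δ) = -δ := by
  show δ * χ₄ ((-1 : ℤ) : ZMod 4) = -δ
  rw [χ₄_int_three_mod_four (by decide), mul_neg_one]

lemma connected_reduced_neg_one {D : ℤ} (hD : D % 8 = 1) (h16 : 16 < D)
    {x : (ℤ × ℤ × ℤ × ℤ) × ℤ} (hx : IsProto D x.1) : x ∼[D] (reduced D (-1), -spin x) := by
  obtain ⟨e, δ, he, hconn⟩ := exists_connected_reduced (ε := x.2) hD hx
  obtain ⟨δ', hconn'⟩ := exists_connected_reduced_neg_one (ε := δ) hD h16 he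
  have hx' : x ∼[D] (reduced D (-1), δ') := .trans _ _ _ hconn hconn'
  rwa [spin_eq_of_connected hD hx', spin_reduced_neg_one, neg_neg]

lemma connected_iff_spin_eq {D : ℤ} (hD : D % 8 = 1) (h16 : 16 < D)
    {x y : (ℤ × ℤ × ℤ × ℤ) × ℤ} (hx : IsProto D x.1) (hy : IsProto D y.1) :
    x ∼[D] y ↔ spin x = spin y := by
  refine ⟨spin_eq_of_connected hD, fun h => ?_⟩
  have hy' := connected_reduced_neg_one hD h16 hy
  rw [← h] at hy'
  exact .trans _ _ _ (connected_reduced_neg_one hD h16 hx) (.symm _ _ hy')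

lemma spin_eq_one_or_eq_neg_one {D : ℤ} (hD : D % 8 = 1) {x : (ℤ × ℤ × ℤ × ℤ) × ℤ}
    (hx : IsProtoQ D x) : spin x = 1 ∨ spin x = -1 := by
  have := Int.odd_iff.mp (hx.1.odd hD)
  rcases hx.2 with h | h <;> simp only [spin, h, χ₄_int_eq_if_mod_four] <;> split_ifs <;> omega

lemma spin_eq_spin_iff {D : ℤ} (hD : D % 8 = 1) {x y : (ℤ × ℤ × ℤ × ℤ) × ℤ} (hx : IsProtoQ D x)
    (hy : IsProtoQ D y) :
    spin x = spin y ↔ (x.2 = y.2 ∧ x.1.2.2.2 % 4 = y.1.2.2.2 % 4) ∨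
      (x.2 = -y.2 ∧ x.1.2.2.2 % 4 = (-y.1.2.2.2) % 4) := by
  obtain ⟨⟨_, _, _, e⟩, ε⟩ := x
  obtain ⟨⟨_, _, _, f⟩, δ⟩ := y
  have := Int.odd_iff.mp (hx.1.odd hD)
  have := Int.odd_iff.mp (hy.1.odd hD)
  rcases hx.2 with rfl | rfl <;> rcases hy.2 with rfl | rfl <;>
    rw [spin, spin, χ₄_int_eq_if_mod_four, χ₄_int_eq_if_mod_four] <;> split_ifs <;> omega

theorem stmt14_general (D : ℤ) (h16 : 16 < D) (hmod : D % 8 = 1) :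
    (∃ x, IsProtoQ D x ∧ ∃ y, IsProtoQ D y ∧
      ¬ Relation.EqvGen (QMove D) x y ∧
      ∀ z, IsProtoQ D z →
        Relation.EqvGen (QMove D) z x ∨ Relation.EqvGen (QMove D) z y) ∧
    (∀ x, IsProtoQ D x → ∀ y, IsProtoQ D y →
      (Relation.EqvGen (QMove D) x y ↔
        ((x.2 = y.2 ∧ x.1.2.2.2 % 4 = y.1.2.2.2 % 4) ∨
         (x.2 = -y.2 ∧ x.1.2.2.2 % 4 = (-y.1.2.2.2) % 4)))) := by
  have hbase : IsProto D (reduced D (-1)) := isProto_reduced hmod (reducedIndex_neg_one h16)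
  refine ⟨⟨(reduced D (-1), 1), ⟨hbase, .inl rfl⟩, (reduced D (-1), -1), ⟨hbase, .inr rfl⟩,
    ?_, fun z hz => ?_⟩, fun x hx y hy => ?_⟩
  · rw [connected_iff_spin_eq hmod h16 hbase hbase, spin_reduced_neg_one, spin_reduced_neg_one]
    norm_num
  · rw [connected_iff_spin_eq hmod h16 hz.1 hbase, connected_iff_spin_eq hmod h16 hz.1 hbase,
      spin_reduced_neg_one, spin_reduced_neg_one, neg_neg]
    exact (spin_eq_one_or_eq_neg_one hmod hz).symm
  · rw [connected_iff_spin_eq hmod h16 hx.1 hy.1]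
    exact spin_eq_spin_iff hmod hx hy

/-- For `D > 16` with `D ≡ 1 (mod 8)` and `D ≠ 41`, the set `𝒬_D` has exactly two
components; `((w,h,t,e),ε)` and `((w',h',t',e'),ε')` lie in the same component iff
either `ε = ε'` and `e ≡ e' (mod 4)`, or `ε = -ε'` and `e ≡ -e' (mod 4)`. -/
theorem stmt14 (D : ℤ) (h16 : 16 < D) (hmod : D % 8 = 1) (h41 : D ≠ 41) :
    (∃ x, IsProtoQ D x ∧ ∃ y, IsProtoQ D y ∧
      ¬ Relation.EqvGen (QMove D) x y ∧
      ∀ z, IsProtoQ D z →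
        Relation.EqvGen (QMove D) z x ∨ Relation.EqvGen (QMove D) z y) ∧
    (∀ x, IsProtoQ D x → ∀ y, IsProtoQ D y →
      (Relation.EqvGen (QMove D) x y ↔
        ((x.2 = y.2 ∧ x.1.2.2.2 % 4 = y.1.2.2.2 % 4) ∨
         (x.2 = -y.2 ∧ x.1.2.2.2 % 4 = (-y.1.2.2.2) % 4)))) :=
  stmt14_general D h16 hmod
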